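/- arXiv:1907.03134 — 4 statements merged into one kernel-verified Lean document; each statement's English description precedes it below -/
import Mathlib

section
/- Let X = X₁ × X₂ be a product of real Hilbert spaces and f : X → ℝ differentiable. Suppose |·|₁ is a seminorm on X satisfying |(x₁, x₂)|₁ ≥ |(x₁, 0)|₁, f is σ₁-strongly convex with respect to |·|₁, and the first block of the gradient ∇₁f is L₁-Lipschitz with respect to |·|₁ in the sense that ⟨∇₁f(x + (h,0)) - ∇₁f(x), (h,0)⟩ ≤ L₁|(h,0)|₁². Let (xⁱ) be the sequence generated by exact alternating minimization over convex nonempty sets 𝒳̃₁ × 𝒳̃₂ ⊂ X₁ × X₂, and let x⋆ be the unique minimizer of f over 𝒳̃₁ × 𝒳̃₂. Then f(xⁱ) - f(x⋆) ≤ (1 - σ₁/L₁)ⁱ (f(x⁰) - f(x⋆)) for all i ∈ ℕ. -/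
/-!
Write `u = xⁱ`, `w = xⁱ⁺¹`, `v = (w₁, u₂)` and `d = x⋆₁ - w₁`. Strong convexity at `w`, with the
optimality of `w₂` in the second block removing the second gradient block, gives
`f w - f x⋆ ≤ -⟪∇₁f(w), d⟫ - σ₁/2 |(d, 0)|₁²` and bounds `f` from below at the (possibly
infeasible) point `(w₁ - τ d, u₂)`. The descent lemma for the first block at `v`, together with
`⟪∇₁f(v), d⟫ ≥ 0` (optimality of `w₁`), bounds `f` from above at the same point. Combining the
three, `τ (f w - f x⋆) ≤ f u - f w` whenever `(L₁ - σ₁) τ ≤ σ₁`; the choice `τ = σ₁ / (L₁ - σ₁)`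
(or `τ → ∞` if `σ₁ = L₁`) yields the contraction `f w - f x⋆ ≤ (1 - σ₁/L₁) (f u - f x⋆)`.
-/

open Set

section Calculus

lemma le_add_deriv_add_of_deriv_sub_le {φ φ' : ℝ → ℝ} (hφ : ∀ t, HasDerivAt φ (φ' t) t) {K : ℝ}
    (h : ∀ t ∈ Ioo (0 : ℝ) 1, φ' t - φ' 0 ≤ K * t) :
    φ 1 ≤ φ 0 + φ' 0 + K / 2 := by
  set ψ : ℝ → ℝ := fun t => φ 0 + φ' 0 * t + K / 2 * t ^ 2 - φ t
  have hψ : ∀ t, HasDerivAt ψ (φ' 0 + K * t - φ' t) t := fun t =>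
    ((((hasDerivAt_id t).const_mul (φ' 0)).const_add (φ 0)).add
      ((hasDerivAt_pow 2 t).const_mul (K / 2))).sub (hφ t) |>.congr_deriv (by norm_num; ring)
  have hψd : Differentiable ℝ ψ := fun t => (hψ t).differentiableAt
  have hmono : MonotoneOn ψ (Icc 0 1) := by
    refine monotoneOn_of_deriv_nonneg (convex_Icc 0 1) hψd.continuous.continuousOn
      hψd.differentiableOn fun t ht => ?_
    rw [interior_Icc] at ht
    rw [(hψ t).deriv]
    linarith [h t ht]
  have := hmono (left_mem_Icc.2 zero_le_one) (right_mem_Icc.2 zero_le_one) zero_le_one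
  simp only [ψ] at this
  linarith

variable {E : Type*} [NormedAddCommGroup E] [NormedSpace ℝ E] {f : E → ℝ}

lemma le_add_fderiv_add_of_fderiv_sub_le {Df : E → E →L[ℝ] ℝ}
    (hf : ∀ x, HasFDerivAt f (Df x) x) {x η : E} {K : ℝ}
    (h : ∀ t ∈ Ioo (0 : ℝ) 1, Df (x + t • η) η - Df x η ≤ K * t) :
    f (x + η) ≤ f x + Df x η + K / 2 := by
  have hline : ∀ t : ℝ, HasDerivAt (fun s : ℝ => f (x + s • η)) (Df (x + t • η) η) t :=
    fun t => (hf _).comp_hasDerivAt t (((hasDerivAt_id t).smul_const η).const_add x |>.congr_deriv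
      (one_smul ℝ η))
  simpa using le_add_deriv_add_of_deriv_sub_le hline (by simpa using h)

lemma IsMinOn.fderiv_sub_nonneg {s : Set E} (hs : Convex ℝ s) {f' : E →L[ℝ] ℝ} {y z : E}
    (hmin : IsMinOn f s y) (hy : y ∈ s) (hz : z ∈ s) (hf : HasFDerivAt f f' y) :
    0 ≤ f' (z - y) :=
  hmin.localize.hasFDerivWithinAt_nonneg hf.hasFDerivWithinAt
    (sub_mem_posTangentConeAt_of_segment_subset (hs.segment_subset hy hz))

end Calculus

lemma le_one_sub_div_mul_add_of_forall_mul_le {σ L a b : ℝ} (hσ : 0 < σ) (hσL : σ ≤ L)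
    (h : ∀ τ > 0, (L - σ) * τ ≤ σ → τ * a ≤ b) :
    a ≤ (1 - σ / L) * (a + b) := by
  have hL : 0 < L := hσ.trans_le hσL
  suffices σ * a ≤ (L - σ) * b by
    rw [one_sub_div hL.ne', div_mul_eq_mul_div, le_div_iff₀ hL]
    linarith
  rcases hσL.lt_or_eq with hlt | rfl
  · have hτ : (L - σ) * (σ / (L - σ)) = σ := mul_div_cancel₀ _ (sub_pos.2 hlt).ne'
    have := mul_le_mul_of_nonneg_left (h _ (div_pos hσ (sub_pos.2 hlt)) hτ.le)
      (sub_pos.2 hlt).le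
    rwa [← mul_assoc, hτ] at this
  · rw [sub_self, zero_mul]
    by_contra! ha
    have ha : 0 < a := pos_of_mul_pos_right ha hσ.le
    have hτ := h ((|b| + 1) / a) (by positivity) (by rw [sub_self, zero_mul]; exact hσ.le)
    rw [div_mul_cancel₀ _ ha.ne'] at hτ
    linarith [le_abs_self b]

open scoped RealInnerProductSpace

section Blocks

variable {X₁ X₂ : Type*} [NormedAddCommGroup X₁] [InnerProductSpace ℝ X₁]
  [NormedAddCommGroup X₂] [InnerProductSpace ℝ X₂]
  {f : X₁ × X₂ → ℝ} {f' : X₁ × X₂ → X₁ × X₂} {Df : X₁ × X₂ → (X₁ × X₂) →L[ℝ] ℝ}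
  {p₁ : Seminorm ℝ (X₁ × X₂)}

lemma inner_fst_sub_nonneg_of_isMinOn (hdiff : ∀ x, HasFDerivAt f (Df x) x)
    (hgrad : ∀ x v, Df x v = ⟪(f' x).1, v.1⟫ + ⟪(f' x).2, v.2⟫)
    {S₁ : Set X₁} (hS₁ : Convex ℝ S₁) {x₁ y₁ : X₁} {x₂ : X₂}
    (hmin : IsMinOn (fun z₁ => f (z₁, x₂)) S₁ x₁) (hx₁ : x₁ ∈ S₁) (hy₁ : y₁ ∈ S₁) :
    0 ≤ ⟪(f' (x₁, x₂)).1, y₁ - x₁⟫ := by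
  have := hmin.fderiv_sub_nonneg hS₁ hx₁ hy₁
    ((hdiff (x₁, x₂)).comp x₁ (hasFDerivAt_prodMk_left x₁ x₂))
  simpa [hgrad] using this

lemma inner_snd_sub_nonneg_of_isMinOn (hdiff : ∀ x, HasFDerivAt f (Df x) x)
    (hgrad : ∀ x v, Df x v = ⟪(f' x).1, v.1⟫ + ⟪(f' x).2, v.2⟫)
    {S₂ : Set X₂} (hS₂ : Convex ℝ S₂) {x₁ : X₁} {x₂ y₂ : X₂}
    (hmin : IsMinOn (fun z₂ => f (x₁, z₂)) S₂ x₂) (hx₂ : x₂ ∈ S₂) (hy₂ : y₂ ∈ S₂) :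
    0 ≤ ⟪(f' (x₁, x₂)).2, y₂ - x₂⟫ := by
  have := hmin.fderiv_sub_nonneg hS₂ hx₂ hy₂
    ((hdiff (x₁, x₂)).comp x₂ (hasFDerivAt_prodMk_right x₁ x₂))
  simpa [hgrad] using this

lemma le_add_inner_fst_add_of_lipschitz_fst (hdiff : ∀ x, HasFDerivAt f (Df x) x)
    (hgrad : ∀ x v, Df x v = ⟪(f' x).1, v.1⟫ + ⟪(f' x).2, v.2⟫) {L₁ : ℝ}
    (hlip : ∀ (x : X₁ × X₂) (h : X₁), ⟪(f' (x + (h, 0))).1 - (f' x).1, h⟫ ≤ L₁ * p₁ (h, 0) ^ 2)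
    (x : X₁ × X₂) (h : X₁) :
    f (x + (h, 0)) ≤ f x + ⟪(f' x).1, h⟫ + L₁ / 2 * p₁ (h, 0) ^ 2 := by
  have key : ∀ t ∈ Ioo (0 : ℝ) 1,
      Df (x + t • (h, 0)) (h, 0) - Df x (h, 0) ≤ L₁ * p₁ (h, 0) ^ 2 * t := by
    intro t ht
    have hsmul : ((t • h, 0) : X₁ × X₂) = t • (h, 0) := by simp
    have := hlip x (t • h)
    rw [hsmul, map_smul_eq_mul, Real.norm_of_nonneg ht.1.le, real_inner_smul_right] at this
    simp only [hgrad, inner_zero_right, add_zero, ← inner_sub_left]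
    nlinarith [ht.1]
  simpa [hgrad, mul_div_right_comm] using le_add_fderiv_add_of_fderiv_sub_le hdiff key

lemma le_of_strongConvex_of_inner_snd_nonneg {σ₁ : ℝ} (hσ₁ : 0 ≤ σ₁)
    (hp₁ : ∀ x : X₁ × X₂, p₁ (x.1, 0) ≤ p₁ x)
    (hconv : ∀ x y : X₁ × X₂,
      f x + (⟪(f' x).1, y.1 - x.1⟫ + ⟪(f' x).2, y.2 - x.2⟫) + σ₁ / 2 * p₁ (y - x) ^ 2 ≤ f y)
    {w y : X₁ × X₂} (hy : 0 ≤ ⟪(f' w).2, y.2 - w.2⟫) :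
    f w + ⟪(f' w).1, y.1 - w.1⟫ + σ₁ / 2 * p₁ (y.1 - w.1, 0) ^ 2 ≤ f y := by
  have hfst : p₁ (y.1 - w.1, 0) ^ 2 ≤ p₁ (y - w) ^ 2 :=
    pow_le_pow_left₀ (apply_nonneg _ _) (hp₁ (y - w)) 2
  linarith [hconv w y, mul_le_mul_of_nonneg_left hfst (by positivity : 0 ≤ σ₁ / 2)]

lemma sub_le_one_sub_div_mul_of_alternating_step (hdiff : ∀ x, HasFDerivAt f (Df x) x)
    (hgrad : ∀ x v, Df x v = ⟪(f' x).1, v.1⟫ + ⟪(f' x).2, v.2⟫)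
    (hp₁ : ∀ x : X₁ × X₂, p₁ (x.1, 0) ≤ p₁ x) {σ₁ L₁ : ℝ} (hσ₁ : 0 < σ₁) (hσL : σ₁ ≤ L₁)
    (hconv : ∀ x y : X₁ × X₂,
      f x + (⟪(f' x).1, y.1 - x.1⟫ + ⟪(f' x).2, y.2 - x.2⟫) + σ₁ / 2 * p₁ (y - x) ^ 2 ≤ f y)
    (hlip : ∀ (x : X₁ × X₂) (h : X₁), ⟪(f' (x + (h, 0))).1 - (f' x).1, h⟫ ≤ L₁ * p₁ (h, 0) ^ 2)
    {S₁ : Set X₁} {S₂ : Set X₂} (hS₁c : Convex ℝ S₁) (hS₂c : Convex ℝ S₂)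
    {u w xstar : X₁ × X₂} (hu₁ : u.1 ∈ S₁) (hu₂ : u.2 ∈ S₂) (hw₁ : w.1 ∈ S₁) (hw₂ : w.2 ∈ S₂)
    (hstar₁ : xstar.1 ∈ S₁) (hstar₂ : xstar.2 ∈ S₂)
    (hmin₁ : IsMinOn (fun y₁ => f (y₁, u.2)) S₁ w.1)
    (hmin₂ : IsMinOn (fun y₂ => f (w.1, y₂)) S₂ w.2) :
    f w - f xstar ≤ (1 - σ₁ / L₁) * (f u - f xstar) := by
  set v : X₁ × X₂ := (w.1, u.2)
  set d := xstar.1 - w.1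
  have hvu : f v ≤ f u := isMinOn_iff.1 hmin₁ u.1 hu₁
  have hwv : f w ≤ f v := isMinOn_iff.1 hmin₂ u.2 hu₂
  have hv_opt : 0 ≤ ⟪(f' v).1, d⟫ :=
    inner_fst_sub_nonneg_of_isMinOn hdiff hgrad hS₁c hmin₁ hw₁ hstar₁
  have hw_opt : ∀ y₂ ∈ S₂, 0 ≤ ⟪(f' w).2, y₂ - w.2⟫ := fun y₂ hy₂ =>
    inner_snd_sub_nonneg_of_isMinOn hdiff hgrad hS₂c hmin₂ hw₂ hy₂
  have hstar : f w + ⟪(f' w).1, d⟫ + σ₁ / 2 * p₁ (d, 0) ^ 2 ≤ f xstar :=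
    le_of_strongConvex_of_inner_snd_nonneg hσ₁.le hp₁ hconv (hw_opt _ hstar₂)
  have hτ : ∀ τ > 0, (L₁ - σ₁) * τ ≤ σ₁ → τ * (f w - f xstar) ≤ f u - f w := by
    intro τ hτ hτσ
    have hscale : p₁ (-(τ • d), 0) = τ * p₁ (d, 0) := by
      rw [show ((-(τ • d), 0) : X₁ × X₂) = (-τ) • (d, 0) by simp, map_smul_eq_mul, norm_neg,
        Real.norm_of_nonneg hτ.le]
    have hlow := le_of_strongConvex_of_inner_snd_nonneg (w := w) (y := (w.1 + -(τ • d), u.2))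
      hσ₁.le hp₁ hconv (hw_opt _ hu₂)
    have hup := le_add_inner_fst_add_of_lipschitz_fst hdiff hgrad hlip v (-(τ • d))
    simp only [add_sub_cancel_left, hscale, inner_neg_right, real_inner_smul_right] at hlow hup
    have : v + (-(τ • d), 0) = (w.1 + -(τ • d), u.2) := by simp [v]
    rw [this] at hup
    linarith [mul_le_mul_of_nonneg_left hstar hτ.le, mul_nonneg hτ.le hv_opt,
      mul_le_mul_of_nonneg_right (mul_le_mul_of_nonneg_left hτσ hτ.le) (sq_nonneg (p₁ (d, 0)))]
  simpa using le_one_sub_div_mul_add_of_forall_mul_le hσ₁ hσL hτ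

end Blocks

theorem alternating_minimization_a_priori_general
    {X₁ X₂ : Type*} [NormedAddCommGroup X₁] [InnerProductSpace ℝ X₁]
    [NormedAddCommGroup X₂] [InnerProductSpace ℝ X₂]
    (f : X₁ × X₂ → ℝ) (f' : X₁ × X₂ → X₁ × X₂) (Df : X₁ × X₂ → (X₁ × X₂) →L[ℝ] ℝ)
    (hdiff : ∀ x, HasFDerivAt f (Df x) x)
    (hgrad : ∀ x v, Df x v = (inner ℝ (f' x).1 v.1 : ℝ) + (inner ℝ (f' x).2 v.2 : ℝ))
    (p₁ : Seminorm ℝ (X₁ × X₂))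
    (hp₁ : ∀ x : X₁ × X₂, p₁ (x.1, 0) ≤ p₁ x)
    (σ₁ L₁ : ℝ) (hσ₁ : 0 < σ₁) (hσL : σ₁ ≤ L₁)
    (hconv : ∀ x y : X₁ × X₂,
      f x + ((inner ℝ (f' x).1 (y.1 - x.1) : ℝ) + (inner ℝ (f' x).2 (y.2 - x.2) : ℝ))
        + σ₁ / 2 * (p₁ (y - x)) ^ 2 ≤ f y)
    (hlip : ∀ (x : X₁ × X₂) (h : X₁),
      (inner ℝ ((f' (x + (h, 0))).1 - (f' x).1) h : ℝ) ≤ L₁ * (p₁ (h, 0)) ^ 2)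
    (S₁ : Set X₁) (S₂ : Set X₂)
    (hS₁c : Convex ℝ S₁) (hS₂c : Convex ℝ S₂)
    (x : ℕ → X₁ × X₂) (hx0 : (x 0).1 ∈ S₁ ∧ (x 0).2 ∈ S₂)
    (hstep1 : ∀ i, (x (i + 1)).1 ∈ S₁ ∧
      ∀ y₁ ∈ S₁, f ((x (i + 1)).1, (x i).2) ≤ f (y₁, (x i).2))
    (hstep2 : ∀ i, (x (i + 1)).2 ∈ S₂ ∧
      ∀ y₂ ∈ S₂, f ((x (i + 1)).1, (x (i + 1)).2) ≤ f ((x (i + 1)).1, y₂))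
    (xstar : X₁ × X₂) (hstar₁ : xstar.1 ∈ S₁) (hstar₂ : xstar.2 ∈ S₂) :
    ∀ i : ℕ, f (x i) - f xstar ≤ (1 - σ₁ / L₁) ^ i * (f (x 0) - f xstar) := by
  have hfeas : ∀ i, (x i).1 ∈ S₁ ∧ (x i).2 ∈ S₂
    | 0 => hx0
    | i + 1 => ⟨(hstep1 i).1, (hstep2 i).1⟩
  have hρ : 0 ≤ 1 - σ₁ / L₁ := sub_nonneg.2 ((div_le_one (hσ₁.trans_le hσL)).2 hσL)
  intro i
  refine le_geom (u := fun i => f (x i) - f xstar) hρ i fun k _ => ?_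
  exact sub_le_one_sub_div_mul_of_alternating_step hdiff hgrad hp₁ hσ₁ hσL hconv hlip hS₁c hS₂c
    (hfeas k).1 (hfeas k).2 (hfeas (k + 1)).1 (hfeas (k + 1)).2 hstar₁ hstar₂
    (isMinOn_iff.2 (hstep1 k).2) (isMinOn_iff.2 (hstep2 k).2)

/-- A priori linear convergence of exact alternating minimization.
`f` is differentiable on the product of Hilbert spaces `X₁ × X₂` with gradient blocks
`(f' x).1, (f' x).2`; `f` is `σ₁`-strongly convex with respect to a seminorm `p₁`
satisfying `p₁ (x₁, 0) ≤ p₁ (x₁, x₂)`, and the first gradient block is `L₁`-Lipschitz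
with respect to `p₁`. Then the alternating minimization iterates over the convex feasible
set `S₁ ×ˢ S₂` satisfy `f(xⁱ) - f(x⋆) ≤ (1 - σ₁/L₁)ⁱ (f(x⁰) - f(x⋆))`. -/
theorem alternating_minimization_a_priori
    {X₁ X₂ : Type*} [NormedAddCommGroup X₁] [InnerProductSpace ℝ X₁] [CompleteSpace X₁]
    [NormedAddCommGroup X₂] [InnerProductSpace ℝ X₂] [CompleteSpace X₂]
    (f : X₁ × X₂ → ℝ) (f' : X₁ × X₂ → X₁ × X₂) (Df : X₁ × X₂ → (X₁ × X₂) →L[ℝ] ℝ)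
    (hdiff : ∀ x, HasFDerivAt f (Df x) x)
    (hgrad : ∀ x v, Df x v = (inner ℝ (f' x).1 v.1 : ℝ) + (inner ℝ (f' x).2 v.2 : ℝ))
    (p₁ : Seminorm ℝ (X₁ × X₂))
    (hp₁ : ∀ x : X₁ × X₂, p₁ (x.1, 0) ≤ p₁ x)
    (σ₁ L₁ : ℝ) (hσ₁ : 0 < σ₁) (hσL : σ₁ ≤ L₁)
    (hconv : ∀ x y : X₁ × X₂,
      f x + ((inner ℝ (f' x).1 (y.1 - x.1) : ℝ) + (inner ℝ (f' x).2 (y.2 - x.2) : ℝ))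
        + σ₁ / 2 * (p₁ (y - x)) ^ 2 ≤ f y)
    (hlip : ∀ (x : X₁ × X₂) (h : X₁),
      (inner ℝ ((f' (x + (h, 0))).1 - (f' x).1) h : ℝ) ≤ L₁ * (p₁ (h, 0)) ^ 2)
    (S₁ : Set X₁) (S₂ : Set X₂)
    (hS₁ : S₁.Nonempty) (hS₂ : S₂.Nonempty) (hS₁c : Convex ℝ S₁) (hS₂c : Convex ℝ S₂)
    (x : ℕ → X₁ × X₂) (hx0 : (x 0).1 ∈ S₁ ∧ (x 0).2 ∈ S₂)
    (hstep1 : ∀ i, (x (i + 1)).1 ∈ S₁ ∧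
      ∀ y₁ ∈ S₁, f ((x (i + 1)).1, (x i).2) ≤ f (y₁, (x i).2))
    (hstep2 : ∀ i, (x (i + 1)).2 ∈ S₂ ∧
      ∀ y₂ ∈ S₂, f ((x (i + 1)).1, (x (i + 1)).2) ≤ f ((x (i + 1)).1, y₂))
    (xstar : X₁ × X₂) (hstar₁ : xstar.1 ∈ S₁) (hstar₂ : xstar.2 ∈ S₂)
    (hstarmin : ∀ y : X₁ × X₂, y.1 ∈ S₁ → y.2 ∈ S₂ → f xstar ≤ f y)
    (hstaruniq : ∀ y : X₁ × X₂, y.1 ∈ S₁ → y.2 ∈ S₂ → f y ≤ f xstar → y = xstar) :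
    ∀ i : ℕ, f (x i) - f xstar ≤ (1 - σ₁ / L₁) ^ i * (f (x 0) - f xstar) :=
  alternating_minimization_a_priori_general f f' Df hdiff hgrad p₁ hp₁ σ₁ L₁ hσ₁ hσL hconv hlip S₁
    S₂ hS₁c hS₂c x hx0 hstep1 hstep2 xstar hstar₁ hstar₂
end

section
/- Under the hypotheses of the alternating minimization convergence lemma (f σ₁-strongly convex w.r.t. |·|₁ with |(x₁,x₂)|₁ ≥ |(x₁,0)|₁, and ∇₁f L₁-Lipschitz w.r.t. |·|₁), the iterates satisfy the a posteriori bound f(xⁱ) - f(x⋆) ≤ (L₁/σ₁)(f(x^{i-1}) - f(xⁱ)) for every i ∈ ℕ. -/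
/-!
Write `a = xⁱ⁻¹`, `b = xⁱ`, `z = (b₁, a₂)` for the intermediate iterate and `u = (x⋆₁ - b₁, 0)`.
First-order optimality of `b` in the second block turns strong convexity at `b` into
`f b + Df b u + σ/2 p(u)² ≤ f x⋆` and `f b - t Df b u ≤ f (z - t u)`. First-order optimality of
`z` in the first block gives `Df z u ≥ 0`, so the descent lemma along the first block yields
`f (z - t u) ≤ f z + L t²/2 p(u)²`. For `t = σ/L` the quadratic terms cancel and
`t (f b - f x⋆) ≤ f z - f b ≤ f a - f b`.
-/

open Set

theorem IsMinOn.hasFDerivAt_sub_nonneg {E : Type*} [NormedAddCommGroup E] [NormedSpace ℝ E]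
    {f : E → ℝ} {f' : E →L[ℝ] ℝ} {s : Set E} {a y : E} (h : IsMinOn f s a) (hs : Convex ℝ s)
    (hf : HasFDerivAt f f' a) (ha : a ∈ s) (hy : y ∈ s) : 0 ≤ f' (y - a) :=
  h.localize.hasFDerivWithinAt_nonneg hf.hasFDerivWithinAt
    (sub_mem_posTangentConeAt_of_segment_subset (hs.segment_subset ha hy))

theorem le_add_deriv_add_half_of_deriv_le {g g' : ℝ → ℝ} {c : ℝ}
    (hg : ∀ t, HasDerivAt g (g' t) t) (hg' : ∀ t ∈ Ioo (0 : ℝ) 1, g' t ≤ g' 0 + c * t) :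
    g 1 ≤ g 0 + g' 0 + c / 2 := by
  have hB : ∀ t, HasDerivAt (fun t ↦ g 0 + g' 0 * t + c / 2 * t ^ 2) (g' 0 + c * t) t :=
    fun t ↦ ((((hasDerivAt_id' t).const_mul (g' 0)).const_add (g 0)).add
      ((hasDerivAt_pow 2 t).const_mul (c / 2))).congr_deriv (by ring)
  have key := image_le_of_deriv_right_le_deriv_boundary (a := 0) (b := 1)
    (fun t _ ↦ (hg t).continuousAt.continuousWithinAt) (fun t _ ↦ (hg t).hasDerivWithinAt)
    (by simp) (fun t _ ↦ (hB t).continuousAt.continuousWithinAt)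
    (fun t _ ↦ (hB t).hasDerivWithinAt) ?_ (right_mem_Icc.2 zero_le_one)
  · simpa using key
  · rintro t ⟨ht0, ht1⟩
    rcases ht0.eq_or_lt with rfl | ht0
    · simp
    · exact hg' t ⟨ht0, ht1⟩

theorem le_add_fderiv_add_half_mul_sq {E : Type*} [NormedAddCommGroup E] [NormedSpace ℝ E]
    {f : E → ℝ} {Df : E → E →L[ℝ] ℝ} (hf : ∀ x, HasFDerivAt f (Df x) x) (p : Seminorm ℝ E)
    {L : ℝ} {x v : E}
    (hlip : ∀ t : ℝ, 0 < t → Df (x + t • v) (t • v) - Df x (t • v) ≤ L * p (t • v) ^ 2) :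
    f (x + v) ≤ f x + Df x v + L / 2 * p v ^ 2 := by
  have hline : ∀ t : ℝ, HasDerivAt (fun t ↦ f (x + t • v)) (Df (x + t • v) v) t := by
    intro t
    have := (hf (x + t • v)).comp_hasDerivAt t (((hasDerivAt_id' t).smul_const v).const_add x)
    rw [one_smul] at this
    exact this
  have key := le_add_deriv_add_half_of_deriv_le hline (c := L * p v ^ 2) fun t ⟨ht0, _⟩ ↦ by
    have h := hlip t ht0
    rw [map_smul, map_smul, map_smul_eq_mul, Real.norm_of_nonneg ht0.le, smul_eq_mul,
      smul_eq_mul] at h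
    simp only [zero_smul, add_zero]
    nlinarith
  simpa [mul_div_right_comm] using key

section Product

variable {X₁ X₂ : Type*} [NormedAddCommGroup X₁] [NormedSpace ℝ X₁]
  [NormedAddCommGroup X₂] [NormedSpace ℝ X₂]
  {f : X₁ × X₂ → ℝ} {Df : X₁ × X₂ → (X₁ × X₂) →L[ℝ] ℝ} {p : Seminorm ℝ (X₁ × X₂)} {σ L : ℝ}

theorem add_fderiv_fst_le_of_fderiv_snd_nonneg (hp : ∀ x : X₁ × X₂, p (x.1, 0) ≤ p x)
    (hσ : 0 ≤ σ) (hconv : ∀ x y, f x + Df x (y - x) + σ / 2 * p (y - x) ^ 2 ≤ f y)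
    {b y : X₁ × X₂} (hsnd : 0 ≤ Df b (0, y.2 - b.2)) :
    f b + Df b (y.1 - b.1, 0) + σ / 2 * p (y.1 - b.1, 0) ^ 2 ≤ f y := by
  have hsplit : Df b (y - b) = Df b (y.1 - b.1, 0) + Df b (0, y.2 - b.2) := by
    rw [← map_add]; congr 1; ext <;> simp
  have hfst : σ / 2 * p (y.1 - b.1, 0) ^ 2 ≤ σ / 2 * p (y - b) ^ 2 := by
    gcongr
    exact hp (y - b)
  linarith [hconv b y]

theorem alternating_step_sub_le (hf : ∀ x, HasFDerivAt f (Df x) x)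
    (hp : ∀ x : X₁ × X₂, p (x.1, 0) ≤ p x) (hσ : 0 < σ) (hσL : σ ≤ L)
    (hconv : ∀ x y, f x + Df x (y - x) + σ / 2 * p (y - x) ^ 2 ≤ f y)
    (hlip : ∀ (x : X₁ × X₂) (h : X₁), Df (x + (h, 0)) (h, 0) - Df x (h, 0) ≤ L * p (h, 0) ^ 2)
    {S₁ : Set X₁} {S₂ : Set X₂} (hS₁ : Convex ℝ S₁) (hS₂ : Convex ℝ S₂) {a b xstar : X₁ × X₂}
    (ha₁ : a.1 ∈ S₁) (ha₂ : a.2 ∈ S₂) (hb₁ : b.1 ∈ S₁) (hb₂ : b.2 ∈ S₂)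
    (hstar₁ : xstar.1 ∈ S₁) (hstar₂ : xstar.2 ∈ S₂)
    (hmin₁ : ∀ y₁ ∈ S₁, f (b.1, a.2) ≤ f (y₁, a.2)) (hmin₂ : ∀ y₂ ∈ S₂, f b ≤ f (b.1, y₂)) :
    f b - f xstar ≤ L / σ * (f a - f b) := by
  set z : X₁ × X₂ := (b.1, a.2)
  set u : X₁ × X₂ := (xstar.1 - b.1, 0)
  set t := σ / L
  have hL : 0 < L := hσ.trans_le hσL
  have ht : 0 < t := div_pos hσ hL
  have hz_min : IsMinOn f (S₁ ×ˢ {a.2}) z := by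
    rintro ⟨y₁, y₂⟩ ⟨hy₁, rfl : y₂ = a.2⟩
    exact hmin₁ y₁ hy₁
  have hb_min : IsMinOn f ({b.1} ×ˢ S₂) b := by
    rintro ⟨y₁, y₂⟩ ⟨rfl : y₁ = b.1, hy₂⟩
    exact hmin₂ y₂ hy₂
  have hz_vi : 0 ≤ Df z u := by
    simpa [z, u] using hz_min.hasFDerivAt_sub_nonneg (hS₁.prod (convex_singleton _)) (hf z)
      (y := (xstar.1, a.2)) ⟨hb₁, rfl⟩ ⟨hstar₁, rfl⟩
  have hb_vi : ∀ y₂ ∈ S₂, 0 ≤ Df b (0, y₂ - b.2) := fun y₂ hy₂ ↦ by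
    convert hb_min.hasFDerivAt_sub_nonneg ((convex_singleton _).prod hS₂) (hf b)
      (y := (b.1, y₂)) ⟨rfl, hb₂⟩ ⟨rfl, hy₂⟩ using 2
    ext <;> simp
  have h_star : f b + Df b u + σ / 2 * p u ^ 2 ≤ f xstar :=
    add_fderiv_fst_le_of_fderiv_snd_nonneg hp hσ.le hconv (hb_vi _ hstar₂)
  have h_step : f b + Df b ((-t) • u) + σ / 2 * p ((-t) • u) ^ 2 ≤ f (z + (-t) • u) := by
    have hy : ((z + (-t) • u).1 - b.1, (0 : X₂)) = (-t) • u := by ext <;> simp [z, u]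
    have := add_fderiv_fst_le_of_fderiv_snd_nonneg hp hσ.le hconv (y := z + (-t) • u)
      (by simpa [z, u] using hb_vi a.2 ha₂)
    rwa [hy] at this
  have h_desc := le_add_fderiv_add_half_mul_sq hf p (x := z) (v := (-t) • u) fun s _ ↦ by
    simpa [u, smul_smul] using hlip z ((s * -t) • (xstar.1 - b.1))
  have hz_le : f z ≤ f a := hmin₁ a.1 ha₁
  simp only [map_smul, map_smul_eq_mul, smul_eq_mul, Real.norm_eq_abs, abs_neg, abs_of_pos ht]
    at h_step h_desc
  have hLt : L * t = σ := mul_div_cancel₀ σ hL.ne'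
  have key : t * (f b - f xstar) ≤ f z - f b := by
    nlinarith [mul_le_mul_of_nonneg_left h_star ht.le, mul_nonneg ht.le hz_vi,
      mul_nonneg hσ.le (sq_nonneg (t * p u))]
  calc f b - f xstar = L / σ * t * (f b - f xstar) := by
        rw [div_mul_eq_mul_div, hLt, div_self hσ.ne', one_mul]
    _ ≤ L / σ * (f a - f b) := by rw [mul_assoc]; gcongr; linarith

end Product

theorem alternating_minimization_a_posteriori_general
    {X₁ X₂ : Type*} [NormedAddCommGroup X₁] [InnerProductSpace ℝ X₁]
    [NormedAddCommGroup X₂] [InnerProductSpace ℝ X₂]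
    (f : X₁ × X₂ → ℝ) (f' : X₁ × X₂ → X₁ × X₂) (Df : X₁ × X₂ → (X₁ × X₂) →L[ℝ] ℝ)
    (hdiff : ∀ x, HasFDerivAt f (Df x) x)
    (hgrad : ∀ x v, Df x v = (inner ℝ (f' x).1 v.1 : ℝ) + (inner ℝ (f' x).2 v.2 : ℝ))
    (p₁ : Seminorm ℝ (X₁ × X₂))
    (hp₁ : ∀ x : X₁ × X₂, p₁ (x.1, 0) ≤ p₁ x)
    (σ₁ L₁ : ℝ) (hσ₁ : 0 < σ₁) (hσL : σ₁ ≤ L₁)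
    (hconv : ∀ x y : X₁ × X₂,
      f x + ((inner ℝ (f' x).1 (y.1 - x.1) : ℝ) + (inner ℝ (f' x).2 (y.2 - x.2) : ℝ))
        + σ₁ / 2 * (p₁ (y - x)) ^ 2 ≤ f y)
    (hlip : ∀ (x : X₁ × X₂) (h : X₁),
      (inner ℝ ((f' (x + (h, 0))).1 - (f' x).1) h : ℝ) ≤ L₁ * (p₁ (h, 0)) ^ 2)
    (S₁ : Set X₁) (S₂ : Set X₂)
    (hS₁c : Convex ℝ S₁) (hS₂c : Convex ℝ S₂)
    (x : ℕ → X₁ × X₂) (hx0 : (x 0).1 ∈ S₁ ∧ (x 0).2 ∈ S₂)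
    (hstep1 : ∀ i, (x (i + 1)).1 ∈ S₁ ∧
      ∀ y₁ ∈ S₁, f ((x (i + 1)).1, (x i).2) ≤ f (y₁, (x i).2))
    (hstep2 : ∀ i, (x (i + 1)).2 ∈ S₂ ∧
      ∀ y₂ ∈ S₂, f ((x (i + 1)).1, (x (i + 1)).2) ≤ f ((x (i + 1)).1, y₂))
    (xstar : X₁ × X₂) (hstar₁ : xstar.1 ∈ S₁) (hstar₂ : xstar.2 ∈ S₂) :
    ∀ i : ℕ, f (x (i + 1)) - f xstar ≤ L₁ / σ₁ * (f (x i) - f (x (i + 1))) := by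
  have hconv' : ∀ x y, f x + Df x (y - x) + σ₁ / 2 * p₁ (y - x) ^ 2 ≤ f y := fun x y ↦ by
    simpa [hgrad] using hconv x y
  have hlip' : ∀ x (h : X₁), Df (x + (h, 0)) (h, 0) - Df x (h, 0) ≤ L₁ * p₁ (h, 0) ^ 2 :=
    fun x h ↦ by simpa [hgrad, inner_sub_left] using hlip x h
  have hfeas : ∀ j, (x j).1 ∈ S₁ ∧ (x j).2 ∈ S₂
    | 0 => hx0
    | j + 1 => ⟨(hstep1 j).1, (hstep2 j).1⟩
  intro i
  exact alternating_step_sub_le hdiff hp₁ hσ₁ hσL hconv' hlip' hS₁c hS₂c (hfeas i).1 (hfeas i).2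
    (hfeas (i + 1)).1 (hfeas (i + 1)).2 hstar₁ hstar₂ (hstep1 i).2 (hstep2 i).2

/-- A posteriori estimate for exact alternating minimization.
`f` is differentiable on the product of Hilbert spaces `X₁ × X₂` with gradient blocks
`(f' x).1, (f' x).2`; `f` is `σ₁`-strongly convex with respect to a seminorm `p₁`
satisfying `p₁ (x₁, 0) ≤ p₁ (x₁, x₂)`, and the first gradient block is `L₁`-Lipschitz
with respect to `p₁`. Then the alternating minimization iterates over the convex feasible
set `S₁ ×ˢ S₂` satisfy `f(xⁱ) - f(x⋆) ≤ (L₁/σ₁)(f(x^{i-1}) - f(xⁱ))`. -/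
theorem alternating_minimization_a_posteriori
    {X₁ X₂ : Type*} [NormedAddCommGroup X₁] [InnerProductSpace ℝ X₁] [CompleteSpace X₁]
    [NormedAddCommGroup X₂] [InnerProductSpace ℝ X₂] [CompleteSpace X₂]
    (f : X₁ × X₂ → ℝ) (f' : X₁ × X₂ → X₁ × X₂) (Df : X₁ × X₂ → (X₁ × X₂) →L[ℝ] ℝ)
    (hdiff : ∀ x, HasFDerivAt f (Df x) x)
    (hgrad : ∀ x v, Df x v = (inner ℝ (f' x).1 v.1 : ℝ) + (inner ℝ (f' x).2 v.2 : ℝ))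
    (p₁ : Seminorm ℝ (X₁ × X₂))
    (hp₁ : ∀ x : X₁ × X₂, p₁ (x.1, 0) ≤ p₁ x)
    (σ₁ L₁ : ℝ) (hσ₁ : 0 < σ₁) (hσL : σ₁ ≤ L₁)
    (hconv : ∀ x y : X₁ × X₂,
      f x + ((inner ℝ (f' x).1 (y.1 - x.1) : ℝ) + (inner ℝ (f' x).2 (y.2 - x.2) : ℝ))
        + σ₁ / 2 * (p₁ (y - x)) ^ 2 ≤ f y)
    (hlip : ∀ (x : X₁ × X₂) (h : X₁),
      (inner ℝ ((f' (x + (h, 0))).1 - (f' x).1) h : ℝ) ≤ L₁ * (p₁ (h, 0)) ^ 2)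
    (S₁ : Set X₁) (S₂ : Set X₂)
    (hS₁ : S₁.Nonempty) (hS₂ : S₂.Nonempty) (hS₁c : Convex ℝ S₁) (hS₂c : Convex ℝ S₂)
    (x : ℕ → X₁ × X₂) (hx0 : (x 0).1 ∈ S₁ ∧ (x 0).2 ∈ S₂)
    (hstep1 : ∀ i, (x (i + 1)).1 ∈ S₁ ∧
      ∀ y₁ ∈ S₁, f ((x (i + 1)).1, (x i).2) ≤ f (y₁, (x i).2))
    (hstep2 : ∀ i, (x (i + 1)).2 ∈ S₂ ∧
      ∀ y₂ ∈ S₂, f ((x (i + 1)).1, (x (i + 1)).2) ≤ f ((x (i + 1)).1, y₂))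
    (xstar : X₁ × X₂) (hstar₁ : xstar.1 ∈ S₁) (hstar₂ : xstar.2 ∈ S₂)
    (hstarmin : ∀ y : X₁ × X₂, y.1 ∈ S₁ → y.2 ∈ S₂ → f xstar ≤ f y)
    (hstaruniq : ∀ y : X₁ × X₂, y.1 ∈ S₁ → y.2 ∈ S₂ → f y ≤ f xstar → y = xstar) :
    ∀ i : ℕ, f (x (i + 1)) - f xstar ≤ L₁ / σ₁ * (f (x i) - f (x (i + 1))) :=
  alternating_minimization_a_posteriori_general f f' Df hdiff hgrad p₁ hp₁ σ₁ L₁ hσ₁ hσL hconv hlip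
    S₁ S₂ hS₁c hS₂c x hx0 hstep1 hstep2 xstar hstar₁ hstar₂
end

section
/- Let H be a real Hilbert space, E₁ : V₁ → [0,∞) strictly convex and continuously differentiable on a Hilbert space V₁, E₂ : Ṽ → [0,∞) convex and continuously differentiable, Λ : V₁ × V₂ → Ṽ affine with linear parts Λ₁, Λ₂, and E(x₁,x₂) = E₁(x₁) + E₂(Λ(x₁,x₂)). For fixed t and x₂, let x₁⋆(x₂) be the unique minimizer of y₁ ↦ E(y₁, x₂) - ⟨P₁, y₁⟩ over V₁, and define the reduced energy E_red(x₂) := E(x₁⋆(x₂), x₂) - ⟨P₁, x₁⋆(x₂)⟩. Then ∇E_red(x₂) = Λ₂⋆ ∇E₂(Λ(x₁⋆(x₂), x₂)), i.e. the derivative of the reduced energy in direction y₂ equals ⟨∇E₂(Λ(x₁⋆(x₂), x₂)), Λ₂ y₂⟩. -/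
/-!
Differentiate `x₂ ↦ F(x₁⋆(x₂), x₂)` with `F(y₁, x₂) = E₁ y₁ + E₂ (Λ (y₁, x₂)) - ⟪P₁, y₁⟫` by the
chain rule. The contribution of `Dx₁⋆` is the partial derivative of `F` in its first variable,
`⟪∇E₁(x₁⋆) + Λ₁⋆ ∇E₂(Λ(x₁⋆, x₂)) - P₁, ·⟫`, which vanishes by the optimality condition; what remains
is the partial derivative in `x₂`, namely `⟪∇E₂(Λ(x₁⋆, x₂)), Λ₂ ·⟫ = ⟪Λ₂⋆ ∇E₂(Λ(x₁⋆, x₂)), ·⟫`.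
-/

open InnerProductSpace ContinuousLinearMap

section Envelope

variable {𝕜 : Type*} [NontriviallyNormedField 𝕜]
  {E G F : Type*} [NormedAddCommGroup E] [NormedSpace 𝕜 E] [NormedAddCommGroup G] [NormedSpace 𝕜 G]
  [NormedAddCommGroup F] [NormedSpace 𝕜 F]

theorem hasFDerivAt_of_sub_eq_apply_sub {f : E → F} {L : E →L[𝕜] F}
    (hf : ∀ x y, f x - f y = L (x - y)) (x : E) : HasFDerivAt f L x := by
  refine (L.hasFDerivAt.add_const (f 0)).congr_of_eventuallyEq (Filter.Eventually.of_forall ?_)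
  intro y
  simpa using sub_eq_iff_eq_add.mp (hf y 0)

theorem HasFDerivAt.envelope {Φ : E × G → F} {Φ' : E × G →L[𝕜] F} {x : G → E} {D : G →L[𝕜] E}
    {a : G} (hΦ : HasFDerivAt Φ Φ' (x a, a)) (hx : HasFDerivAt x D a)
    (hcrit : Φ'.comp (inl 𝕜 E G) = 0) :
    HasFDerivAt (fun y => Φ (x y, y)) (Φ'.comp (inr 𝕜 E G)) a := by
  refine (hΦ.comp (f := fun y => (x y, y)) a (hx.prodMk (hasFDerivAt_id a))).congr_fderiv ?_
  ext v
  have hD : Φ' (inl 𝕜 E G (D v)) = 0 := DFunLike.congr_fun hcrit (D v)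
  have hsplit : Φ' (D v, v) = Φ' (inl 𝕜 E G (D v)) + Φ' (inr 𝕜 E G v) := by
    rw [← map_add, inl_apply, inr_apply, Prod.mk_add_mk, add_zero, zero_add]
  rw [hD, zero_add] at hsplit
  simpa using hsplit

end Envelope

theorem reduced_energy_gradient_general
    {V₁ V₂ W : Type*}
    [NormedAddCommGroup V₁] [InnerProductSpace ℝ V₁] [CompleteSpace V₁]
    [NormedAddCommGroup V₂] [InnerProductSpace ℝ V₂] [CompleteSpace V₂]
    [NormedAddCommGroup W] [InnerProductSpace ℝ W] [CompleteSpace W]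
    (E₁ : V₁ → ℝ) (E₁' : V₁ → V₁) (hE₁ : ∀ x, HasGradientAt E₁ (E₁' x) x)
    (E₂ : W → ℝ) (E₂' : W → W) (hE₂ : ∀ x, HasGradientAt E₂ (E₂' x) x)
    (Λ : V₁ × V₂ → W) (Λ₁ : V₁ →L[ℝ] W) (Λ₂ : V₂ →L[ℝ] W)
    (hΛ : ∀ x y : V₁ × V₂, Λ x - Λ y = Λ₁ (x.1 - y.1) + Λ₂ (x.2 - y.2))
    (P₁ : V₁)
    (xstar : V₂ → V₁) (D : V₂ → V₂ →L[ℝ] V₁)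
    (hxstar_diff : ∀ x₂, HasFDerivAt xstar (D x₂) x₂)
    (hopt : ∀ x₂ : V₂,
      E₁' (xstar x₂) + ContinuousLinearMap.adjoint Λ₁ (E₂' (Λ (xstar x₂, x₂))) = P₁)
    (Ered : V₂ → ℝ)
    (hEred : ∀ x₂, Ered x₂ =
      E₁ (xstar x₂) + E₂ (Λ (xstar x₂, x₂)) - (inner ℝ P₁ (xstar x₂) : ℝ)) :
    ∀ x₂ : V₂,
      HasGradientAt Ered (ContinuousLinearMap.adjoint Λ₂ (E₂' (Λ (xstar x₂, x₂)))) x₂ := by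
  intro x₂
  set p : V₁ × V₂ := (xstar x₂, x₂)
  set w := E₂' (Λ p)
  have hΛp : HasFDerivAt Λ (Λ₁.coprod Λ₂) p :=
    hasFDerivAt_of_sub_eq_apply_sub (fun x y => by simpa using hΛ x y) p
  have hE : HasFDerivAt (fun q : V₁ × V₂ => E₁ q.1 + E₂ (Λ q) - inner ℝ P₁ q.1)
      ((toDual ℝ V₁ (E₁' p.1)).comp (fst ℝ V₁ V₂) + (toDual ℝ W w).comp (Λ₁.coprod Λ₂)
        - (toDual ℝ V₁ P₁).comp (fst ℝ V₁ V₂)) p :=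
    (((hE₁ p.1).hasFDerivAt.comp p hasFDerivAt_fst).add ((hE₂ (Λ p)).hasFDerivAt.comp p hΛp)).sub
      ((toDual ℝ V₁ P₁).hasFDerivAt.comp p hasFDerivAt_fst)
  refine ((hE.envelope (hxstar_diff x₂) ?critical).congr_of_eventuallyEq
    (Filter.Eventually.of_forall hEred)).congr_fderiv ?gradient
  case critical =>
    ext v
    simp [← hopt x₂, adjoint_inner_left, p, w]
  case gradient =>
    ext v
    simp [adjoint_inner_left, w]

/-- Envelope-theorem identity for the reduced energy. With
`E(x₁,x₂) = E₁(x₁) + E₂(Λ(x₁,x₂))`, `Λ` affine with linear parts `Λ₁, Λ₂`,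
`x₁⋆(x₂)` the unique (differentiable in `x₂`) minimizer of `y₁ ↦ E(y₁,x₂) - ⟨P₁,y₁⟩`
characterized by the optimality condition
`∇E₁(x₁⋆) + Λ₁⋆ ∇E₂(Λ(x₁⋆,x₂)) = P₁`, the reduced energy
`E_red(x₂) = E(x₁⋆(x₂),x₂) - ⟨P₁,x₁⋆(x₂)⟩` has gradient
`∇E_red(x₂) = Λ₂⋆ ∇E₂(Λ(x₁⋆(x₂),x₂))`. -/
theorem reduced_energy_gradient
    {V₁ V₂ W : Type*}
    [NormedAddCommGroup V₁] [InnerProductSpace ℝ V₁] [CompleteSpace V₁]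
    [NormedAddCommGroup V₂] [InnerProductSpace ℝ V₂] [CompleteSpace V₂]
    [NormedAddCommGroup W] [InnerProductSpace ℝ W] [CompleteSpace W]
    (E₁ : V₁ → ℝ) (E₁' : V₁ → V₁) (hE₁ : ∀ x, HasGradientAt E₁ (E₁' x) x)
    (hE₁conv : StrictConvexOn ℝ Set.univ E₁) (hE₁nn : ∀ x, 0 ≤ E₁ x)
    (E₂ : W → ℝ) (E₂' : W → W) (hE₂ : ∀ x, HasGradientAt E₂ (E₂' x) x)
    (hE₂conv : ConvexOn ℝ Set.univ E₂) (hE₂nn : ∀ x, 0 ≤ E₂ x)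
    (Λ : V₁ × V₂ → W) (Λ₁ : V₁ →L[ℝ] W) (Λ₂ : V₂ →L[ℝ] W)
    (hΛ : ∀ x y : V₁ × V₂, Λ x - Λ y = Λ₁ (x.1 - y.1) + Λ₂ (x.2 - y.2))
    (P₁ : V₁)
    (xstar : V₂ → V₁) (D : V₂ → V₂ →L[ℝ] V₁)
    (hxstar_diff : ∀ x₂, HasFDerivAt xstar (D x₂) x₂)
    (hxstar_min : ∀ x₂ : V₂, ∀ y₁ : V₁,
      E₁ (xstar x₂) + E₂ (Λ (xstar x₂, x₂)) - (inner ℝ P₁ (xstar x₂) : ℝ) ≤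
        E₁ y₁ + E₂ (Λ (y₁, x₂)) - (inner ℝ P₁ y₁ : ℝ))
    (hopt : ∀ x₂ : V₂,
      E₁' (xstar x₂) + ContinuousLinearMap.adjoint Λ₁ (E₂' (Λ (xstar x₂, x₂))) = P₁)
    (Ered : V₂ → ℝ)
    (hEred : ∀ x₂, Ered x₂ =
      E₁ (xstar x₂) + E₂ (Λ (xstar x₂, x₂)) - (inner ℝ P₁ (xstar x₂) : ℝ)) :
    ∀ x₂ : V₂,
      HasGradientAt Ered (ContinuousLinearMap.adjoint Λ₂ (E₂' (Λ (xstar x₂, x₂)))) x₂ :=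
  reduced_energy_gradient_general E₁ E₁' hE₁ E₂ E₂' hE₂ Λ Λ₁ Λ₂ hΛ P₁ xstar D hxstar_diff hopt Ered
    hEred
end

section
/- In the setting of the reduced energy E_red(x₂) = E(x₁⋆(x₂), x₂) - ⟨P₁, x₁⋆(x₂)⟩ with E(x₁,x₂) = E₁(x₁) + E₂(Λ(x₁,x₂)), E₁ and E₂ convex differentiable, and Λ affine, the operator ∇E_red is monotone: ⟨∇E_red(x₂) - ∇E_red(y₂), x₂ - y₂⟩ ≥ 0 for all x₂, y₂ ∈ V₂. Consequently E_red is convex. -/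
/-!
Subtracting the optimality conditions `∇E₁(x₁⋆) + Λ₁⋆∇E₂(Λ(x₁⋆, x₂)) = P₁` at `x₂` and `y₂`
turns `⟪∇E_red x₂ - ∇E_red y₂, x₂ - y₂⟫` into the sum of the monotonicity pairings of `∇E₂`
and `∇E₁`, both nonnegative for gradients of convex functions. Convexity of `E_red` holds
because it is the partial minimum in `x₁` of the jointly convex `E - ⟪P₁, ·⟫`.
-/

open Set InnerProductSpace ContinuousLinearMap

section Gradient

variable {V : Type*} [NormedAddCommGroup V] [InnerProductSpace ℝ V] [CompleteSpace V]
  {s : Set V} {f : V → ℝ}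

/-- Along `line t = x + t • (y - x)` this is the bound `g' 0 ≤ g 1 - g 0` for the convex
one-variable function `g = f ∘ line`. -/
theorem ConvexOn.add_inner_gradient_le {f' x y : V} (hf : ConvexOn ℝ s f) (hx : x ∈ s)
    (hy : y ∈ s) (hgrad : HasGradientAt f f' x) :
    f x + ⟪f', y - x⟫_ℝ ≤ f y := by
  let line : ℝ →ᵃ[ℝ] V := AffineMap.lineMap x y
  have hline : ∀ t, line t = x + t • (y - x) := fun t => by
    simp [line, AffineMap.lineMap_apply, add_comm]
  have hderiv : HasDerivAt (f ∘ line) ⟪f', y - x⟫_ℝ 0 := by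
    have hcurve : HasDerivAt line (y - x) 0 := by
      simpa [funext hline] using ((hasDerivAt_id (0 : ℝ)).smul_const (y - x)).const_add x
    simpa using (hgrad.hasFDerivAt.comp_hasDerivAt_of_eq 0 hcurve (by simp [hline]))
  have hslope := (hf.comp_affineMap line).le_slope_of_hasDerivAt (x := 0) (y := 1)
    (by simpa [hline] using hx) (by simpa [hline] using hy) zero_lt_one hderiv
  simp only [slope_def_field, Function.comp_apply, hline, one_smul, zero_smul, add_zero,
    add_sub_cancel, sub_zero, div_one] at hslope
  linarith

theorem ConvexOn.inner_gradient_sub_nonneg {f' : V → V} (hf : ConvexOn ℝ s f)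
    (hgrad : ∀ x ∈ s, HasGradientAt f (f' x) x) {x y : V} (hx : x ∈ s) (hy : y ∈ s) :
    0 ≤ ⟪f' x - f' y, x - y⟫_ℝ := by
  have hxy := hf.add_inner_gradient_le hx hy (hgrad x hx)
  have hyx := hf.add_inner_gradient_le hy hx (hgrad y hy)
  rw [← neg_sub x y, inner_neg_right] at hxy
  rw [inner_sub_left]
  linarith

end Gradient

section Adjoint

variable {V₁ V₂ W : Type*}
  [NormedAddCommGroup V₁] [InnerProductSpace ℝ V₁] [CompleteSpace V₁]
  [NormedAddCommGroup V₂] [InnerProductSpace ℝ V₂] [CompleteSpace V₂]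
  [NormedAddCommGroup W] [InnerProductSpace ℝ W] [CompleteSpace W]

theorem inner_adjoint_sub_eq_add {Λ₁ : V₁ →L[ℝ] W} {Λ₂ : V₂ →L[ℝ] W} {a b u v : W}
    {g h p q : V₁} {x y : V₂} (huv : u - v = Λ₁ (p - q) + Λ₂ (x - y))
    (hopt : g + adjoint Λ₁ a = h + adjoint Λ₁ b) :
    ⟪adjoint Λ₂ a - adjoint Λ₂ b, x - y⟫_ℝ = ⟪a - b, u - v⟫_ℝ + ⟪g - h, p - q⟫_ℝ := by
  have hadj : adjoint Λ₁ (a - b) = -(g - h) := by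
    rw [map_sub]
    linear_combination (norm := abel1) hopt
  have hΛ₁ : ⟪a - b, Λ₁ (p - q)⟫_ℝ = -⟪g - h, p - q⟫_ℝ := by
    rw [← adjoint_inner_left, hadj, inner_neg_left]
  have hΛ₂ : Λ₂ (x - y) = (u - v) - Λ₁ (p - q) := by
    rw [huv]; abel
  rw [← map_sub, adjoint_inner_left, hΛ₂, inner_sub_right, hΛ₁]
  ring

end Adjoint

section PartialMinimization

variable {E F : Type*} [AddCommGroup E] [Module ℝ E] [AddCommGroup F] [Module ℝ F]

theorem ConvexOn.comp_minimizer {s : Set F} {Φ : E × F → ℝ} {m : F → E}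
    (hΦ : ConvexOn ℝ (univ ×ˢ s) Φ) (hm : ∀ y x, Φ (m y, y) ≤ Φ (x, y)) :
    ConvexOn ℝ s fun y => Φ (m y, y) := by
  have hs : Convex ℝ s := by
    simpa [snd_image_prod univ_nonempty] using hΦ.1.linear_image (LinearMap.snd ℝ E F)
  refine ⟨hs, fun y₁ hy₁ y₂ hy₂ a b ha hb hab => ?_⟩
  calc Φ (m (a • y₁ + b • y₂), a • y₁ + b • y₂)
      ≤ Φ (a • m y₁ + b • m y₂, a • y₁ + b • y₂) := hm _ _
    _ = Φ (a • (m y₁, y₁) + b • (m y₂, y₂)) := rfl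
    _ ≤ a • Φ (m y₁, y₁) + b • Φ (m y₂, y₂) :=
      hΦ.2 ⟨mem_univ _, hy₁⟩ ⟨mem_univ _, hy₂⟩ ha hb hab

end PartialMinimization

theorem convexOn_add_comp_affine_sub_inner {V₁ V₂ W : Type*}
    [NormedAddCommGroup V₁] [InnerProductSpace ℝ V₁] [AddCommGroup V₂] [Module ℝ V₂]
    [AddCommGroup W] [Module ℝ W] {E₁ : V₁ → ℝ} {E₂ : W → ℝ} {Λ : V₁ × V₂ → W}
    {L : V₁ × V₂ →ₗ[ℝ] W} (hΛ : ∀ x, Λ x - Λ 0 = L x) (hE₁ : ConvexOn ℝ univ E₁)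
    (hE₂ : ConvexOn ℝ univ E₂) (P : V₁) :
    ConvexOn ℝ univ fun x : V₁ × V₂ => E₁ x.1 + E₂ (Λ x) - ⟪P, x.1⟫_ℝ := by
  let Λaff : V₁ × V₂ →ᵃ[ℝ] W := AffineMap.mk' Λ L 0 fun x => by
    simp [← hΛ]
  have hE₁fst : ConvexOn ℝ univ fun x : V₁ × V₂ => E₁ x.1 :=
    hE₁.comp_linearMap (LinearMap.fst ℝ V₁ V₂)
  have hinner : ConcaveOn ℝ univ fun x : V₁ × V₂ => ⟪P, x.1⟫_ℝ :=
    ((innerₛₗ ℝ P).comp (LinearMap.fst ℝ V₁ V₂)).concaveOn convex_univ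
  exact (hE₁fst.add (hE₂.comp_affineMap Λaff)).sub hinner

theorem reduced_energy_gradient_monotone_general
    {V₁ V₂ W : Type*}
    [NormedAddCommGroup V₁] [InnerProductSpace ℝ V₁] [CompleteSpace V₁]
    [NormedAddCommGroup V₂] [InnerProductSpace ℝ V₂] [CompleteSpace V₂]
    [NormedAddCommGroup W] [InnerProductSpace ℝ W] [CompleteSpace W]
    (E₁ : V₁ → ℝ) (E₁' : V₁ → V₁) (hE₁ : ∀ x, HasGradientAt E₁ (E₁' x) x)
    (hE₁conv : ConvexOn ℝ Set.univ E₁)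
    (E₂ : W → ℝ) (E₂' : W → W) (hE₂ : ∀ x, HasGradientAt E₂ (E₂' x) x)
    (hE₂conv : ConvexOn ℝ Set.univ E₂)
    (Λ : V₁ × V₂ → W) (Λ₁ : V₁ →L[ℝ] W) (Λ₂ : V₂ →L[ℝ] W)
    (hΛ : ∀ x y : V₁ × V₂, Λ x - Λ y = Λ₁ (x.1 - y.1) + Λ₂ (x.2 - y.2))
    (P₁ : V₁)
    (xstar : V₂ → V₁)
    (hxstar_min : ∀ x₂ : V₂, ∀ y₁ : V₁,
      E₁ (xstar x₂) + E₂ (Λ (xstar x₂, x₂)) - (inner ℝ P₁ (xstar x₂) : ℝ) ≤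
        E₁ y₁ + E₂ (Λ (y₁, x₂)) - (inner ℝ P₁ y₁ : ℝ))
    (hopt : ∀ x₂ : V₂,
      E₁' (xstar x₂) + ContinuousLinearMap.adjoint Λ₁ (E₂' (Λ (xstar x₂, x₂))) = P₁)
    (G : V₂ → V₂)
    (hG : ∀ x₂, G x₂ = ContinuousLinearMap.adjoint Λ₂ (E₂' (Λ (xstar x₂, x₂))))
    (Ered : V₂ → ℝ)
    (hEred : ∀ x₂, Ered x₂ =
      E₁ (xstar x₂) + E₂ (Λ (xstar x₂, x₂)) - (inner ℝ P₁ (xstar x₂) : ℝ)) :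
    (∀ x₂ y₂ : V₂, 0 ≤ (inner ℝ (G x₂ - G y₂) (x₂ - y₂) : ℝ)) ∧
      ConvexOn ℝ Set.univ Ered := by
  constructor
  · intro x₂ y₂
    rw [hG, hG, inner_adjoint_sub_eq_add (hΛ (xstar x₂, x₂) (xstar y₂, y₂))
      ((hopt x₂).trans (hopt y₂).symm)]
    exact add_nonneg
      (hE₂conv.inner_gradient_sub_nonneg (fun x _ => hE₂ x) (mem_univ _) (mem_univ _))
      (hE₁conv.inner_gradient_sub_nonneg (fun x _ => hE₁ x) (mem_univ _) (mem_univ _))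
  · have hE : ConvexOn ℝ (univ ×ˢ univ)
        fun x : V₁ × V₂ => E₁ x.1 + E₂ (Λ x) - ⟪P₁, x.1⟫_ℝ := by
      rw [univ_prod_univ]
      exact convexOn_add_comp_affine_sub_inner (L := (Λ₁.coprod Λ₂ : V₁ × V₂ →L[ℝ] W))
        (fun x => by simpa using hΛ x 0) hE₁conv hE₂conv P₁
    rw [funext hEred]
    exact hE.comp_minimizer hxstar_min

/-- Monotonicity of the gradient of the reduced energy, hence convexity
of `E_red`. In the setting of the envelope lemma (E = E₁ + E₂ ∘ Λ with E₁, E₂ convex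
differentiable and Λ affine), the map `G x₂ = Λ₂⋆ ∇E₂(Λ(x₁⋆(x₂),x₂))`, which is the
gradient of `E_red`, is monotone, and consequently `E_red` is convex. -/
theorem reduced_energy_gradient_monotone
    {V₁ V₂ W : Type*}
    [NormedAddCommGroup V₁] [InnerProductSpace ℝ V₁] [CompleteSpace V₁]
    [NormedAddCommGroup V₂] [InnerProductSpace ℝ V₂] [CompleteSpace V₂]
    [NormedAddCommGroup W] [InnerProductSpace ℝ W] [CompleteSpace W]
    (E₁ : V₁ → ℝ) (E₁' : V₁ → V₁) (hE₁ : ∀ x, HasGradientAt E₁ (E₁' x) x)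
    (hE₁conv : ConvexOn ℝ Set.univ E₁)
    (E₂ : W → ℝ) (E₂' : W → W) (hE₂ : ∀ x, HasGradientAt E₂ (E₂' x) x)
    (hE₂conv : ConvexOn ℝ Set.univ E₂)
    (Λ : V₁ × V₂ → W) (Λ₁ : V₁ →L[ℝ] W) (Λ₂ : V₂ →L[ℝ] W)
    (hΛ : ∀ x y : V₁ × V₂, Λ x - Λ y = Λ₁ (x.1 - y.1) + Λ₂ (x.2 - y.2))
    (P₁ : V₁)
    (xstar : V₂ → V₁)
    (hxstar_min : ∀ x₂ : V₂, ∀ y₁ : V₁,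
      E₁ (xstar x₂) + E₂ (Λ (xstar x₂, x₂)) - (inner ℝ P₁ (xstar x₂) : ℝ) ≤
        E₁ y₁ + E₂ (Λ (y₁, x₂)) - (inner ℝ P₁ y₁ : ℝ))
    (hopt : ∀ x₂ : V₂,
      E₁' (xstar x₂) + ContinuousLinearMap.adjoint Λ₁ (E₂' (Λ (xstar x₂, x₂))) = P₁)
    (G : V₂ → V₂)
    (hG : ∀ x₂, G x₂ = ContinuousLinearMap.adjoint Λ₂ (E₂' (Λ (xstar x₂, x₂))))
    (Ered : V₂ → ℝ)
    (hEred : ∀ x₂, Ered x₂ =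
      E₁ (xstar x₂) + E₂ (Λ (xstar x₂, x₂)) - (inner ℝ P₁ (xstar x₂) : ℝ))
    (hEredgrad : ∀ x₂, HasGradientAt Ered (G x₂) x₂) :
    (∀ x₂ y₂ : V₂, 0 ≤ (inner ℝ (G x₂ - G y₂) (x₂ - y₂) : ℝ)) ∧
      ConvexOn ℝ Set.univ Ered :=
  reduced_energy_gradient_monotone_general E₁ E₁' hE₁ hE₁conv E₂ E₂' hE₂ hE₂conv Λ Λ₁ Λ₂ hΛ P₁ xstar
    hxstar_min hopt G hG Ered hEred
end
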